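/- Let μ = (μ₁,…,μ_s) be a partition with s ≥ 2, let 2 ≤ i ≤ s with μ_{i-1} > μ_i, and let μ↑_i denote μ with its i-th part increased by 1. Then f(μ↑_i) − f(μ) = (2μ_i + s − i + 1) f(μ↑_i − 1̂) − (2μ_i + s − i) f(μ − 1̂). -/

import Mathlib

/-- The odd double factorial `(2k-1)!! = 1 * 3 * ... * (2k-1)`, with `odf 0 = 1`. -/
def odf (k : Nat) : Int := ∏ j ∈ Finset.Icc 1 k, (2 * (j : Int) - 1)

/-- Subtract `k` from every part, deleting parts that become zero. -/
def subHat (k : Nat) (l : List Nat) : List Nat :=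
  (l.map (fun x => x - k)).filter (fun x => x ≠ 0)

/-- `l` is a partition: a non-increasing list of positive integers. -/
def IsPartition (l : List Nat) : Prop := l.Chain' (· ≥ ·) ∧ ∀ x ∈ l, 0 < x

/-- Increase the `i`-th part (1-based indexing). -/
def upAt (i : Nat) (l : List Nat) : List Nat := l.set (i - 1) (l.getD (i - 1) 0 + 1)

/-- Decrease the `j`-th part (1-based indexing), deleting it if it becomes zero. -/
def downAt (j : Nat) (l : List Nat) : List Nat :=
  (l.set (j - 1) (l.getD (j - 1) 0 - 1)).filter (fun x => x ≠ 0)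


/-!
Write `μ = λ ++ [r]`. Since all parts of `λ` are at least `r`, the recursion expands
`f (λ ++ [a]) = ∑ₖ C(a,k) (2k-1)!! f (λ - k̂)`, and likewise `f (μ↑ᵢ - 1̂)` and `f (μ - 1̂)`, whose last
part is `r - 1` or `r`. When `i = s`, comparing coefficients leaves `r C(r-1,k) = (r-k) C(r,k)`.
When `i < s`, Pascal's rule `C(r,k) = C(r-1,k) + C(r-1,k-1)` reduces the claim to the differences
`f (λ↑ᵢ - k̂) - f (λ - k̂)` for `k < r`. As all parts of `λ` exceed `k`, `λ - k̂` has the length of `λ`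
and `i`-th part `μᵢ - k`, so induction on the length applies; the factor `2k+1` in
`(2k+1)!! = (2k+1) (2k-1)!!` compensates the shift `μᵢ ↦ μᵢ - k`.
-/

lemma odf_succ (k : ℕ) : odf (k + 1) = (2 * k + 1) * odf k := by
  rw [odf, Finset.prod_Icc_succ_top (by omega), ← odf]
  push_cast
  ring

lemma subHat_append (k : ℕ) (l₁ l₂ : List ℕ) :
    subHat k (l₁ ++ l₂) = subHat k l₁ ++ subHat k l₂ := by
  simp [subHat, List.filter_append]

lemma subHat_eq_map {k : ℕ} {l : List ℕ} (h : ∀ x ∈ l, k < x) :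
    subHat k l = l.map (· - k) := by
  rw [subHat, List.filter_eq_self]
  simp only [List.mem_map, forall_exists_index, and_imp, forall_apply_eq_imp_iff₂]
  intro x hx
  have := h x hx
  simp; omega

lemma subHat_zero {l : List ℕ} (h : ∀ x ∈ l, 0 < x) : subHat 0 l = l := by
  simp [subHat_eq_map h]

lemma subHat_subHat (a b : ℕ) (l : List ℕ) : subHat a (subHat b l) = subHat (a + b) l := by
  induction l with
  | nil => rfl
  | cons x t ih =>
    simp only [subHat, List.map_cons, List.filter_cons] at *
    by_cases h1 : x - b = 0 <;> by_cases h2 : x - (b + a) = 0 <;>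
      simp_all [Nat.sub_add_eq, Nat.add_comm a b]

lemma mem_subHat {k x : ℕ} {l : List ℕ} : x ∈ subHat k l ↔ x ≠ 0 ∧ ∃ y ∈ l, y - k = x := by
  simp [subHat, and_comm]

lemma sum_range_succ_eq_add_sum_Icc (F : ℕ → ℤ) (n : ℕ) :
    ∑ k ∈ Finset.range (n + 1), F k = F 0 + ∑ k ∈ Finset.Icc 1 n, F k := by
  rw [Finset.range_eq_Ico, Finset.sum_eq_sum_Ico_succ_bot (by omega),
    Finset.Ico_add_one_right_eq_Icc, zero_add]

lemma isPartition_iff_pairwise {l : List ℕ} :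
    IsPartition l ↔ l.Pairwise (· ≥ ·) ∧ ∀ x ∈ l, 0 < x :=
  and_congr_left' List.isChain_iff_pairwise

lemma isPartition_append_singleton {l : List ℕ} {a : ℕ} :
    IsPartition (l ++ [a]) ↔ IsPartition l ∧ 0 < a ∧ ∀ x ∈ l, a ≤ x := by
  simp only [isPartition_iff_pairwise, List.pairwise_append, List.pairwise_singleton,
    List.mem_append, List.mem_singleton, true_and]
  constructor
  · rintro ⟨⟨hl, hge⟩, hpos⟩
    exact ⟨⟨hl, fun x hx => hpos x (.inl hx)⟩, hpos a (.inr rfl), fun x hx => hge x hx a rfl⟩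
  · rintro ⟨⟨hl, hpos⟩, ha, hge⟩
    refine ⟨⟨hl, fun x hx b hb => hb ▸ hge x hx⟩, ?_⟩
    rintro x (hx | rfl)
    exacts [hpos x hx, ha]

lemma IsPartition.subHat {l : List ℕ} (h : IsPartition l) (k : ℕ) : IsPartition (subHat k l) := by
  rw [isPartition_iff_pairwise] at h ⊢
  refine ⟨(h.1.map _ fun a b (hab : a ≥ b) => Nat.sub_le_sub_right hab k).filter _, ?_⟩
  intro x hx
  exact Nat.pos_of_ne_zero (mem_subHat.1 hx).1

lemma IsPartition.upAt {l : List ℕ} (h : IsPartition l) {i : ℕ} (hi : 2 ≤ i) (hil : i ≤ l.length)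
    (hlt : l.getD (i - 1) 0 < l.getD (i - 2) 0) : IsPartition (upAt i l) := by
  rw [isPartition_iff_pairwise, List.pairwise_iff_getElem] at h ⊢
  obtain ⟨hmono, hpos⟩ := h
  rw [List.getD_eq_getElem _ _ (by omega), List.getD_eq_getElem _ _ (by omega)] at hlt
  have hmono' : ∀ a b (hab : a ≤ b) (hb : b < l.length), l[b] ≤ l[a] := fun a b hab hb => by
    rcases hab.eq_or_lt with rfl | hab
    exacts [le_rfl, hmono a b _ hb hab]
  unfold _root_.upAt
  refine ⟨fun a b ha hb hab => ?_, fun x hx => ?_⟩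
  · simp only [List.length_set] at ha hb
    simp only [List.getElem_set, List.getD_eq_getElem _ _ (show i - 1 < l.length by omega)]
    split_ifs with h1 h2 h2
    · omega
    · have := hmono' (i - 1) b (by omega) hb; omega
    · have := hmono' a (i - 2) (by omega) (by omega); omega
    · exact hmono a b ha hb hab
  · rcases List.mem_or_eq_of_mem_set hx with hx | rfl
    exacts [hpos x hx, Nat.succ_pos _]

lemma length_subHat {k : ℕ} {l : List ℕ} (h : ∀ x ∈ l, k < x) : (subHat k l).length = l.length := by
  simp [subHat_eq_map h]

lemma getD_subHat {k : ℕ} {l : List ℕ} (h : ∀ x ∈ l, k < x) (j : ℕ) :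
    (subHat k l).getD j 0 = l.getD j 0 - k := by
  simpa [subHat_eq_map h] using List.getD_map (d := 0) (l := l) (n := j) (· - k)

lemma upAt_append {i : ℕ} {l : List ℕ} (hi : i - 1 < l.length) (t : List ℕ) :
    upAt i (l ++ t) = upAt i l ++ t := by
  rw [upAt, upAt, List.getD_append _ _ _ _ hi, List.set_append, if_pos hi]

lemma upAt_length_succ (l : List ℕ) (a : ℕ) : upAt (l.length + 1) (l ++ [a]) = l ++ [a + 1] := by
  simp [upAt]

lemma subHat_upAt {k i : ℕ} {l : List ℕ} (h : ∀ x ∈ l, k < x) (hi : i - 1 < l.length) :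
    subHat k (upAt i l) = upAt i (subHat k l) := by
  have hup : ∀ x ∈ upAt i l, k < x := by
    intro x hx
    rcases List.mem_or_eq_of_mem_set hx with hx | rfl
    · exact h x hx
    · have := h _ (List.getElem_mem hi)
      rw [List.getD_eq_getElem _ _ hi]; omega
  have := h _ (List.getElem_mem hi)
  rw [subHat_eq_map hup, upAt, upAt, subHat_eq_map h, List.map_set,
    List.getD_eq_getElem _ _ hi, List.getD_eq_getElem _ _ (by simpa using hi)]
  simp only [List.getElem_map]
  congr 1
  omega

def SatisfiesLastPartRecursion (f : List ℕ → ℤ) : Prop :=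
  ∀ l : List ℕ, IsPartition l → 2 ≤ l.length →
    f l = f l.dropLast + ∑ k ∈ Finset.Icc 1 (l.getLastD 0),
      ((l.getLastD 0).choose k : ℤ) * odf k * f (subHat k l.dropLast)

namespace SatisfiesLastPartRecursion

variable {f : List ℕ → ℤ} (hf : SatisfiesLastPartRecursion f)
include hf

theorem f_subHat_append {ν : List ℕ} {a j : ℕ} (h : IsPartition (ν ++ [a])) (hν : ν ≠ [])
    (hj : j ≤ a) :
    f (subHat j (ν ++ [a])) =
      ∑ k ∈ Finset.range (a - j + 1), ((a - j).choose k : ℤ) * odf k * f (subHat (k + j) ν) := by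
  obtain ⟨hνp, ha, hge⟩ := isPartition_append_singleton.1 h
  rcases hj.eq_or_lt with rfl | hja
  · simp [subHat, odf]
  have hmap : subHat j ν = ν.map (· - j) := subHat_eq_map fun x hx => by
    have := hge x hx; omega
  have happ : subHat j (ν ++ [a]) = subHat j ν ++ [a - j] := by
    rw [subHat_append]; simp [subHat]; omega
  have hpart : IsPartition (subHat j ν ++ [a - j]) := by
    refine isPartition_append_singleton.2 ⟨hνp.subHat j, by omega, fun x hx => ?_⟩
    obtain ⟨-, y, hy, rfl⟩ := mem_subHat.1 hx
    have := hge y hy; omega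
  have hlen : 2 ≤ (subHat j ν ++ [a - j]).length := by
    simpa [hmap, Nat.one_le_iff_ne_zero] using hν
  rw [happ, hf _ hpart hlen, List.dropLast_concat, List.getLastD_concat,
    sum_range_succ_eq_add_sum_Icc]
  simp [subHat_subHat, odf]

theorem f_append {ν : List ℕ} {a : ℕ} (h : IsPartition (ν ++ [a])) (hν : ν ≠ []) :
    f (ν ++ [a]) = ∑ k ∈ Finset.range (a + 1), (a.choose k : ℤ) * odf k * f (subHat k ν) := by
  simpa [subHat_zero h.2] using hf.f_subHat_append h hν (Nat.zero_le a)

theorem f_append_succ_sub {l : List ℕ} {r : ℕ} (h : IsPartition (l ++ [r + 1])) (hl : l ≠ [])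
    (hr : 0 < r) :
    f (l ++ [r + 1]) - f (l ++ [r]) =
      (2 * r + 1) * f (subHat 1 (l ++ [r + 1])) - 2 * r * f (subHat 1 (l ++ [r])) := by
  obtain ⟨hlp, -, hge⟩ := isPartition_append_singleton.1 h
  have h' : IsPartition (l ++ [r]) :=
    isPartition_append_singleton.2 ⟨hlp, hr, fun x hx => (hge x hx).trans' r.le_succ⟩
  obtain ⟨q, rfl⟩ : ∃ q, r = q + 1 := ⟨r - 1, by omega⟩
  set y : ℕ → ℤ := fun k => odf k * f (subHat k l)
  rw [hf.f_append h hl, hf.f_append h' hl, hf.f_subHat_append h hl (by omega),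
    hf.f_subHat_append h' hl (by omega)]
  simp only [mul_assoc, Nat.add_sub_cancel]
  set z : ℕ → ℤ := fun k => odf k * f (subHat (k + 1) l)
  have hext : ∑ k ∈ Finset.range (q + 1), (q.choose k : ℤ) * z k =
      ∑ k ∈ Finset.range (q + 2), (q.choose k : ℤ) * z k := by
    simp [Finset.sum_range_succ _ (q + 1)]
  rw [Finset.sum_choose_succ_mul (fun k _ => y k), add_sub_cancel_left, hext, ← mul_assoc 2,
    Finset.mul_sum, Finset.mul_sum, ← Finset.sum_sub_distrib]
  refine Finset.sum_congr rfl fun k hk => ?_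
  have hchoose : ((q + 1 : ℕ) : ℤ) * q.choose k = ((q + 1 : ℕ) - k : ℤ) * (q + 1).choose k := by
    rw [← Nat.cast_sub (by simp at hk; omega), ← Nat.cast_mul, ← Nat.cast_mul, mul_comm,
      Nat.choose_mul_succ_eq, mul_comm]
  simp only [y, z, odf_succ]
  linear_combination (2 * odf k * f (subHat (k + 1) l)) * hchoose

theorem f_append_sub_f_append {l l' : List ℕ} {q : ℕ} (c : ℤ) (h : IsPartition (l ++ [q + 1]))
    (h' : IsPartition (l' ++ [q + 1])) (hl : l ≠ []) (hl' : l' ≠ [])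
    (hsub : ∀ k ≤ q, f (subHat k l') - f (subHat k l) =
      (c - 2 * k + 1) * f (subHat (k + 1) l') - (c - 2 * k) * f (subHat (k + 1) l)) :
    f (l' ++ [q + 1]) - f (l ++ [q + 1]) =
      (c + 2) * f (subHat 1 (l' ++ [q + 1])) - (c + 1) * f (subHat 1 (l ++ [q + 1])) := by
  rw [hf.f_append h hl, hf.f_append h' hl', hf.f_subHat_append h hl (by omega),
    hf.f_subHat_append h' hl' (by omega)]
  simp only [mul_assoc, Nat.add_sub_cancel]
  rw [Finset.sum_choose_succ_mul (fun k _ => odf k * f (subHat k l)),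
    Finset.sum_choose_succ_mul (fun k _ => odf k * f (subHat k l'))]
  simp only [Finset.mul_sum, ← Finset.sum_add_distrib, ← Finset.sum_sub_distrib]
  refine Finset.sum_congr rfl fun k hk => ?_
  rw [odf_succ]
  linear_combination (q.choose k * odf k : ℤ) * hsub k (by simp at hk; omega)

end SatisfiesLastPartRecursion

theorem SatisfiesLastPartRecursion.f_upAt_sub {f : List ℕ → ℤ} (hf : SatisfiesLastPartRecursion f)
    {μ : List ℕ} (hμ : IsPartition μ) {i : ℕ} (hi : 2 ≤ i) (hiμ : i ≤ μ.length)
    (hlt : μ.getD (i - 1) 0 < μ.getD (i - 2) 0) :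
    f (upAt i μ) - f μ
      = (2 * (μ.getD (i - 1) 0 : ℤ) + μ.length - i + 1) * f (subHat 1 (upAt i μ))
        - (2 * (μ.getD (i - 1) 0 : ℤ) + μ.length - i) * f (subHat 1 μ) := by
  induction hn : μ.length generalizing μ i with
  | zero => omega
  | succ n ih =>
    obtain ⟨l, r, rfl⟩ := (List.eq_nil_or_concat' μ).resolve_left (by rintro rfl; simp at hn)
    obtain ⟨hl, hr, hge⟩ := isPartition_append_singleton.1 hμ
    have hln : l.length = n := by simpa using hn
    have hup := hμ.upAt hi hiμ hlt
    have hne : l ≠ [] := by rintro rfl; simp at hiμ; omega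
    subst hln
    rw [List.length_append, List.length_singleton] at hiμ
    rcases hiμ.eq_or_lt with rfl | hin
    · have hgetD : (l ++ [r]).getD l.length 0 = r := by simp
      simp only [Nat.add_sub_cancel, upAt_length_succ, hgetD] at hup ⊢
      rw [add_sub_cancel_right]
      linear_combination hf.f_append_succ_sub hup hne hr
    · have hil : i - 1 < l.length := by omega
      have hgetD : ∀ j < l.length, (l ++ [r]).getD j 0 = l.getD j 0 :=
        fun j hj => List.getD_append _ _ _ _ hj
      rw [hgetD _ hil, hgetD _ (by omega)] at hlt
      rw [upAt_append hil] at hup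
      rw [upAt_append hil, hgetD _ hil]
      have hrm : r ≤ l.getD (i - 1) 0 :=
        hge _ (by rw [List.getD_eq_getElem l 0 hil]; exact List.getElem_mem hil)
      set m := l.getD (i - 1) 0
      obtain ⟨q, rfl⟩ : ∃ q, r = q + 1 := ⟨r - 1, by omega⟩
      have key := hf.f_append_sub_f_append (2 * m + l.length - i) hμ hup hne
        (by simpa [upAt] using hne) fun k hk => ?_
      · push_cast
        linear_combination key
      have hk' : ∀ x ∈ l, k < x := fun x hx => by have := hge x hx; omega
      have hsub := ih (hl.subHat k) hi (by rw [length_subHat hk']; omega)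
        (by rw [getD_subHat hk', getD_subHat hk']; omega) (length_subHat hk')
      rw [getD_subHat hk', ← subHat_upAt hk' hil, subHat_subHat, subHat_subHat, add_comm 1 k,
        Nat.cast_sub (by omega)] at hsub
      linear_combination hsub

theorem stmt5_general
    (f : List Nat → Int)
    (hfr : ∀ l : List Nat, IsPartition l → 2 ≤ l.length →
      f l = f l.dropLast + ∑ k ∈ Finset.Icc 1 (l.getLastD 0),
        ((l.getLastD 0).choose k : Int) * odf k * f (subHat k l.dropLast))
    (μ : List Nat) (hμ : IsPartition μ)
    (i : Nat) (hi2 : 2 ≤ i) (his : i ≤ μ.length)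
    (hlt : μ.getD (i - 1) 0 < μ.getD (i - 2) 0) :
    f (upAt i μ) - f μ
      = (2 * (μ.getD (i - 1) 0 : Int) + (μ.length : Int) - (i : Int) + 1) * f (subHat 1 (upAt i μ))
        - (2 * (μ.getD (i - 1) 0 : Int) + (μ.length : Int) - (i : Int)) * f (subHat 1 μ) :=
  SatisfiesLastPartRecursion.f_upAt_sub hfr hμ hi2 his hlt

theorem stmt5
    (d : Nat → Int) (hd0 : d 0 = 1) (hd1 : d 1 = 0)
    (hd : ∀ n : Nat, 2 ≤ n → d n = 2 * ((n : Int) - 1) * (d (n - 1) + d (n - 2)))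
    (f : List Nat → Int) (hf0 : f [] = 1) (hf1 : ∀ m : Nat, f [m] = d m)
    (hfr : ∀ l : List Nat, IsPartition l → 2 ≤ l.length →
      f l = f l.dropLast + ∑ k ∈ Finset.Icc 1 (l.getLastD 0),
        ((l.getLastD 0).choose k : Int) * odf k * f (subHat k l.dropLast))
    (μ : List Nat) (hμ : IsPartition μ) (hs : 2 ≤ μ.length)
    (i : Nat) (hi2 : 2 ≤ i) (his : i ≤ μ.length)
    (hlt : μ.getD (i - 1) 0 < μ.getD (i - 2) 0) :
    f (upAt i μ) - f μ
      = (2 * (μ.getD (i - 1) 0 : Int) + (μ.length : Int) - (i : Int) + 1) * f (subHat 1 (upAt i μ))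
        - (2 * (μ.getD (i - 1) 0 : Int) + (μ.length : Int) - (i : Int)) * f (subHat 1 μ) :=
  stmt5_general f hfr μ hμ i hi2 his hlt
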